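/- Let γ ∈ ℤ₂ be a 2-adic integer that is not (the image of) a rational integer, i.e. γ ∉ ℤ. Then the sequence m ↦ C(2m,m)·C(γ,m) (where C(2m,m) is the ordinary central binomial coefficient viewed in ℤ₂) does NOT tend to 0 in ℤ₂ as m → ∞. In particular, if m = 2^n is a power of 2 appearing in the base-2 expansion of γ, then v₂(C(γ,2^n)) = 0 while v₂(C(2^{n+1},2^n)) = 1. -/

import Mathlib

/-!
Reducing `X(X-1)⋯(X-m+1)` modulo `x - N` shows that `C(x,m)` and `C(N,m)` agree up to
`‖x - N‖ / ‖m!‖`. For `N = appr x m` we have `‖x - N‖ ≤ p^(-m) < ‖m!‖` by Legendre, so `C(x,m)` is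
a `p`-adic unit as soon as `p ∤ C(N,m)`. For `p = 2` and `m = 2^n`, Lucas' theorem says that
`C(N, 2^n)` is odd iff bit `n` of `N` is set, and that bit is the `n`-th binary digit of `x`.
A 2-adic integer that is not a natural number has infinitely many nonzero digits, and
`v₂(C(2^(n+1), 2^n)) = 2^n - v₂((2^n)!) = 1`, so `‖C(2m,m) C(x,m)‖ = 1/2` for infinitely many `m`.
-/

/-- The generalized binomial coefficient `C(γ, m) = γ(γ-1)⋯(γ-m+1)/m!` for `γ ∈ ℚ_p`. -/
noncomputable def pChoose (p : ℕ) [Fact p.Prime] (γ : ℚ_[p]) (m : ℕ) : ℚ_[p] :=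
  (descPochhammer ℚ_[p] m).eval γ / (m.factorial : ℚ_[p])

open scoped Nat

theorem Nat.choose_two_pow_mod_two (N n : ℕ) : N.choose (2 ^ n) % 2 = (N.testBit n).toNat := by
  induction n generalizing N with
  | zero => rcases Nat.mod_two_eq_zero_or_one N with h | h <;> simp [Nat.testBit_zero, h]
  | succ n ih =>
    have lucas :=
      Choose.choose_modEq_choose_mod_mul_choose_div_nat (p := 2) (n := N) (k := 2 ^ (n + 1))
    rw [Nat.pow_succ, Nat.mul_mod_left, Nat.mul_div_cancel _ two_pos, Nat.choose_zero_right,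
      one_mul] at lucas
    rw [Nat.pow_succ, lucas, ih, Nat.testBit_succ]

theorem padicValNat_two_factorial_two_pow (n : ℕ) : padicValNat 2 (2 ^ n)! = 2 ^ n - 1 := by
  induction n with
  | zero => simp
  | succ n ih =>
    rw [Nat.pow_succ', padicValNat_factorial_mul, ih]
    have := Nat.one_le_two_pow (n := n)
    omega

theorem padicValNat_two_choose_two_mul_add_factorial (m : ℕ) :
    padicValNat 2 ((2 * m).choose m) + padicValNat 2 m ! = m := by
  have hle : m ≤ 2 * m := Nat.le_mul_of_pos_left m two_pos
  have h := Nat.choose_mul_factorial_mul_factorial hle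
  rw [show 2 * m - m = m by omega] at h
  have hv := congrArg (padicValNat 2) h
  have hchoose := (Nat.choose_pos hle).ne'
  rw [padicValNat.mul (by positivity) (by positivity), padicValNat.mul hchoose (by positivity),
    padicValNat_factorial_mul] at hv
  omega

namespace PadicInt

variable {p : ℕ} [Fact p.Prime]

theorem appr_mod_pow (x : ℤ_[p]) {m n : ℕ} (h : m ≤ n) : x.appr n % p ^ m = x.appr m := by
  rw [← (Nat.modEq_iff_dvd' (x.appr_mono h)).2 (x.dvd_appr_sub_appr m n h),
    Nat.mod_eq_of_lt (x.appr_lt m)]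

theorem eq_appr_of_forall_appr_eq {x : ℤ_[p]} {N : ℕ} (h : ∀ K ≥ N, x.appr K = x.appr N) :
    x = x.appr N := by
  refine ext_of_toZModPow.1 fun K => ?_
  rw [← sub_eq_zero, ← map_sub, ← RingHom.mem_ker, ker_toZModPow, ← h _ (le_max_right K N)]
  exact Ideal.span_singleton_le_span_singleton.2 (pow_dvd_pow _ (le_max_left K N))
    (appr_spec _ x)

theorem norm_sub_appr_lt_norm_factorial (x : ℤ_[p]) {m : ℕ} (hm : m ≠ 0) :
    ‖x - x.appr m‖ < ‖(m ! : ℚ_[p])‖ := by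
  have hle := (norm_le_pow_iff_mem_span_pow _ m).2 (x.appr_spec m)
  rw [Padic.norm_eq_zpow_neg_valuation (by exact_mod_cast m.factorial_ne_zero),
    Padic.valuation_natCast]
  refine hle.trans_lt (zpow_lt_zpow_right₀ (by exact_mod_cast (Fact.out : p.Prime).one_lt) ?_)
  have := padicValNat_factorial_lt_of_ne_zero p hm
  omega

theorem testBit_appr (x : ℤ_[2]) {n K : ℕ} (h : n < K) :
    (x.appr K).testBit n = (x.appr (n + 1)).testBit n := by
  rw [← x.appr_mod_pow h, Nat.testBit_mod_two_pow]
  simp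

theorem exists_testBit_appr_of_ne_natCast {x : ℤ_[2]} (hx : ∀ a : ℕ, (a : ℤ_[2]) ≠ x) (N : ℕ) :
    ∃ n ≥ N, (x.appr (n + 1)).testBit n := by
  by_contra! h
  have appr_lt (K : ℕ) : x.appr K < 2 ^ N := Nat.lt_pow_two_of_testBit _ fun i hi => by
    rcases lt_or_ge i K with hiK | hiK
    · rw [testBit_appr x hiK]
      simpa using h i hi
    · exact Nat.testBit_lt_two_pow ((x.appr_lt K).trans_le (Nat.pow_le_pow_right two_pos hiK))
  refine hx (x.appr N) (eq_appr_of_forall_appr_eq fun K hK => ?_).symm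
  rw [← x.appr_mod_pow hK, Nat.mod_eq_of_lt (appr_lt K)]

end PadicInt

section pChoose

variable {p : ℕ} [Fact p.Prime]

theorem pChoose_natCast (N m : ℕ) : pChoose p N m = N.choose m := by
  rw [pChoose, descPochhammer_eval_eq_descFactorial, Nat.descFactorial_eq_factorial_mul_choose,
    Nat.cast_mul, mul_div_cancel_left₀ _ (by exact_mod_cast m.factorial_ne_zero)]

theorem descPochhammer_eval_padicInt_coe (x : ℤ_[p]) (m : ℕ) :
    (descPochhammer ℚ_[p] m).eval (x : ℚ_[p]) = ((descPochhammer ℤ_[p] m).eval x : ℤ_[p]) := by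
  rw [← descPochhammer_map PadicInt.Coe.ringHom]
  exact Polynomial.eval_map_apply PadicInt.Coe.ringHom x

theorem norm_pChoose_sub_mul_norm_factorial_le (x y : ℤ_[p]) (m : ℕ) :
    ‖pChoose p x m - pChoose p y m‖ * ‖(m ! : ℚ_[p])‖ ≤ ‖x - y‖ := by
  obtain ⟨c, hc⟩ := Polynomial.sub_dvd_eval_sub x y (descPochhammer ℤ_[p] m)
  have hm : (m ! : ℚ_[p]) ≠ 0 := by exact_mod_cast m.factorial_ne_zero
  rw [← norm_mul, pChoose, pChoose, ← sub_div, div_mul_cancel₀ _ hm,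
    descPochhammer_eval_padicInt_coe, descPochhammer_eval_padicInt_coe, ← PadicInt.coe_sub, hc,
    PadicInt.padic_norm_e_of_padicInt, norm_mul]
  exact mul_le_of_le_one_right (norm_nonneg _) c.norm_le_one

theorem norm_pChoose_eq_one {x : ℤ_[p]} {N m : ℕ} (hx : ‖x - N‖ < ‖(m ! : ℚ_[p])‖)
    (hN : ¬ p ∣ N.choose m) : ‖pChoose p x m‖ = 1 := by
  have hNm : ‖pChoose p (N : ℤ_[p]) m‖ = 1 := by
    rw [PadicInt.coe_natCast, pChoose_natCast, Padic.norm_natCast_eq_one_iff]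
    exact (Nat.Prime.coprime_iff_not_dvd Fact.out).2 hN
  refine (Padic.norm_eq_of_norm_sub_lt_right
    (lt_of_mul_lt_mul_right ?_ (norm_nonneg (m ! : ℚ_[p])))).trans hNm
  rw [hNm, one_mul]
  exact (norm_pChoose_sub_mul_norm_factorial_le x N m).trans_lt hx

theorem norm_pChoose_eq_one_of_not_dvd_choose_appr {x : ℤ_[p]} {m : ℕ} (hm : m ≠ 0)
    (h : ¬ p ∣ (x.appr m).choose m) : ‖pChoose p x m‖ = 1 :=
  norm_pChoose_eq_one (x.norm_sub_appr_lt_norm_factorial hm) h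

end pChoose

theorem norm_pChoose_two_pow_eq_one {x : ℤ_[2]} {n : ℕ} (h : (x.appr (n + 1)).testBit n) :
    ‖pChoose 2 x (2 ^ n)‖ = 1 := by
  refine norm_pChoose_eq_one_of_not_dvd_choose_appr (by positivity) ?_
  rw [Nat.two_dvd_ne_zero, Nat.choose_two_pow_mod_two, x.testBit_appr n.lt_two_pow_self, h]
  rfl

theorem padicValNat_two_choose_two_pow_succ (n : ℕ) :
    padicValNat 2 ((2 ^ (n + 1)).choose (2 ^ n)) = 1 := by
  have h := padicValNat_two_choose_two_mul_add_factorial (2 ^ n)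
  rw [padicValNat_two_factorial_two_pow, ← pow_succ'] at h
  have := Nat.one_le_two_pow (n := n)
  omega

theorem norm_choose_two_pow_succ_two_pow (n : ℕ) :
    ‖((2 ^ (n + 1)).choose (2 ^ n) : ℚ_[2])‖ = 2⁻¹ := by
  have hpos := Nat.choose_pos (Nat.pow_le_pow_right two_pos n.le_succ)
  rw [Padic.norm_eq_zpow_neg_valuation (by exact_mod_cast hpos.ne'), Padic.valuation_natCast,
    padicValNat_two_choose_two_pow_succ]
  norm_num

/-- For `γ ∈ ℤ₂ \ ℤ`, the sequence `C(2m,m)·C(γ,m)` does not tend to `0` 2-adically; in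
particular for any `n` such that `2^n` occurs in the binary expansion of `γ`,
`v₂(C(γ,2^n)) = 0` while `v₂(C(2^{n+1},2^n)) = 1`. -/
theorem stmt_10 (γ : ℤ_[2]) (hγ : ¬ ∃ z : ℤ, (z : ℤ_[2]) = γ) :
    (¬ Filter.Tendsto
        (fun m : ℕ => ((Nat.choose (2 * m) m : ℚ_[2])) * pChoose 2 (γ : ℚ_[2]) m)
        Filter.atTop (nhds 0)) ∧
    ∀ n : ℕ, Nat.testBit (PadicInt.appr γ (n + 1)) n = true →
      ‖pChoose 2 (γ : ℚ_[2]) (2 ^ n)‖ = 1 ∧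
      padicValNat 2 (Nat.choose (2 ^ (n + 1)) (2 ^ n)) = 1 := by
  refine ⟨fun hlim => ?_, fun n hn =>
    ⟨norm_pChoose_two_pow_eq_one hn, padicValNat_two_choose_two_pow_succ n⟩⟩
  obtain ⟨M, hM⟩ := Metric.tendsto_atTop.1 hlim 2⁻¹ (by norm_num)
  obtain ⟨n, hnM, hn⟩ := γ.exists_testBit_appr_of_ne_natCast
    (fun a ha => hγ ⟨a, by rwa [Int.cast_natCast]⟩) M
  have hsmall := hM (2 ^ n) (hnM.trans n.lt_two_pow_self.le)
  rw [dist_zero_right, norm_mul, norm_pChoose_two_pow_eq_one hn, mul_one, ← pow_succ',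
    norm_choose_two_pow_succ_two_pow] at hsmall
  exact lt_irrefl _ hsmall
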